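/- Let V be a smooth complete (or locally defined with flow Ψ : U → ℝⁿ, U ⊆ ℝⁿ × ℝ open) vector field on ℝⁿ with flow Ψ, and let Z ⊆ ℝⁿ be a closed set. For p ∈ Z let K_p be the connected component of 0 in {t : (p,t) ∈ U, Ψ(p,t) ∈ Z along [0,t] or [t,0]} (precisely: the connected component of 0 in the set of t with (p,s) ∈ U and Ψ(p,s) ∈ Z for all s between 0 and t). Then the set W = {(p,t) ∈ U : p ∈ Z, t ∈ K_p} is closed in U. -/
import Mathlib


/-- The domain `W = {(p,t) : p ∈ Z, t ∈ K_p}` of the flow of a vector field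
restricted to a closed set `Z` is closed in `U`. -/
theorem flow_domain_closed {n : ℕ}
    (U : Set (EuclideanSpace ℝ (Fin n) × ℝ)) (hU : IsOpen U)
    (hslice : ∀ p : EuclideanSpace ℝ (Fin n),
      Set.OrdConnected {t : ℝ | (p, t) ∈ U})
    (h0 : ∀ p : EuclideanSpace ℝ (Fin n), (p, (0 : ℝ)) ∈ U)
    (Ψ : EuclideanSpace ℝ (Fin n) × ℝ → EuclideanSpace ℝ (Fin n))
    (hΨ : ContinuousOn Ψ U)
    (hΨ0 : ∀ p, Ψ (p, 0) = p)
    (Z : Set (EuclideanSpace ℝ (Fin n))) (hZ : IsClosed Z) :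
    ∃ F, IsClosed F ∧
      {q : EuclideanSpace ℝ (Fin n) × ℝ | q ∈ U ∧ q.1 ∈ Z ∧
          q.2 ∈ connectedComponentIn
            {t : ℝ | ∀ s ∈ Set.uIcc 0 t, (q.1, s) ∈ U ∧ Ψ (q.1, s) ∈ Z} 0}
        = F ∩ U := by
  classical
  -- the simplified description of the set
  set W : Set (EuclideanSpace ℝ (Fin n) × ℝ) :=
    {q | q ∈ U ∧ ∀ s ∈ Set.uIcc 0 q.2, (q.1, s) ∈ U ∧ Ψ (q.1, s) ∈ Z} with hWdef
  -- each slice set S_p is order-connected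
  have hSord : ∀ p : EuclideanSpace ℝ (Fin n),
      Set.OrdConnected {t : ℝ | ∀ s ∈ Set.uIcc 0 t, (p, s) ∈ U ∧ Ψ (p, s) ∈ Z} := by
    intro p
    constructor
    intro a ha b hb c hc s hs
    rcases le_or_gt 0 c with h0c | h0c
    · have hsub : Set.uIcc 0 c ⊆ Set.uIcc 0 b :=
        Set.uIcc_subset_uIcc Set.left_mem_uIcc (Set.mem_uIcc.2 (Or.inl ⟨h0c, hc.2⟩))
      exact hb s (hsub hs)
    · have hsub : Set.uIcc 0 c ⊆ Set.uIcc 0 a :=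
        Set.uIcc_subset_uIcc Set.left_mem_uIcc (Set.mem_uIcc.2 (Or.inr ⟨hc.1, h0c.le⟩))
      exact ha s (hsub hs)
  -- W ⊆ fst ⁻¹' Z
  have hWZ : W ⊆ Prod.fst ⁻¹' Z := by
    rintro q ⟨-, hq⟩
    have := (hq 0 (Set.left_mem_uIcc)).2
    rwa [hΨ0] at this
  refine ⟨closure W, isClosed_closure, ?_⟩
  ext q
  simp only [Set.mem_setOf_eq, Set.mem_inter_iff]
  constructor
  · rintro ⟨hqU, hqZ, hcc⟩
    have hS : ∀ s ∈ Set.uIcc 0 q.2, (q.1, s) ∈ U ∧ Ψ (q.1, s) ∈ Z :=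
      connectedComponentIn_subset _ _ hcc
    exact ⟨subset_closure ⟨hqU, hS⟩, hqU⟩
  · rintro ⟨hqcl, hqU⟩
    have hq1Z : q.1 ∈ Z := by
      have : q ∈ closure (Prod.fst ⁻¹' Z) := closure_mono hWZ hqcl
      rwa [IsClosed.closure_eq (hZ.preimage continuous_fst)] at this
    obtain ⟨p, t⟩ := q
    simp only at hq1Z hqU hqcl ⊢
    -- key: all of uIcc 0 t works
    have hmem : ∀ s ∈ Set.uIcc 0 t, (p, s) ∈ U ∧ Ψ (p, s) ∈ Z := by
      intro s hs
      have hpsU : (p, s) ∈ U :=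
        (hslice p).uIcc_subset (h0 p) hqU hs
      refine ⟨hpsU, ?_⟩
      rcases eq_or_ne t 0 with rfl | ht
      · have : s = 0 := by simpa using hs
        subst this
        rw [hΨ0]; exact hq1Z
      · set a : ℝ := s / t with ha
        have hat : a * t = s := div_mul_cancel₀ s ht
        have ha01 : 0 ≤ a ∧ a ≤ 1 := by
          rcases ht.lt_or_gt with h | h
          · have hs' : t ≤ s ∧ s ≤ 0 := by
              rcases Set.mem_uIcc.1 hs with h' | h'
              · exact ⟨by nlinarith [h'.1, h'.2], by nlinarith [h'.1, h'.2]⟩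
              · exact ⟨h'.1, h'.2⟩
            constructor
            · exact div_nonneg_of_nonpos hs'.2 h.le
            · rw [div_le_one_iff]; exact Or.inr (Or.inr ⟨h, hs'.1⟩)
          · have hs' : 0 ≤ s ∧ s ≤ t := by
              rcases Set.mem_uIcc.1 hs with h' | h'
              · exact ⟨h'.1, h'.2⟩
              · exact ⟨by nlinarith [h'.1, h'.2], by nlinarith [h'.1, h'.2]⟩
            exact ⟨div_nonneg hs'.1 h.le, (div_le_one h).2 hs'.2⟩
        -- the map g
        have hmul : ∀ t' : ℝ, a * t' ∈ Set.uIcc 0 t' := by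
          intro t'
          rcases le_or_gt 0 t' with h | h
          · exact Set.mem_uIcc.2 (Or.inl ⟨by nlinarith [ha01.1, ha01.2], by nlinarith [ha01.1, ha01.2]⟩)
          · exact Set.mem_uIcc.2 (Or.inr ⟨by nlinarith [ha01.1, ha01.2], by nlinarith [ha01.1, ha01.2]⟩)
        set g : EuclideanSpace ℝ (Fin n) × ℝ → EuclideanSpace ℝ (Fin n) :=
          fun q' => Ψ (q'.1, a * q'.2) with hg
        have hgW : ∀ q' ∈ W, g q' ∈ Z := by
          rintro q' ⟨-, hq'⟩
          exact (hq' (a * q'.2) (hmul q'.2)).2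
        have hgc : ContinuousAt g (p, t) := by
          have h1 : ContinuousAt (fun q' : EuclideanSpace ℝ (Fin n) × ℝ => (q'.1, a * q'.2)) (p, t) :=
            (continuous_fst.prodMk (continuous_const.mul continuous_snd)).continuousAt
          have h2 : ContinuousAt Ψ (p, a * t) := by
            rw [hat]
            exact hΨ.continuousAt (hU.mem_nhds hpsU)
          exact ContinuousAt.comp (g := Ψ)
            (f := fun q' : EuclideanSpace ℝ (Fin n) × ℝ => (q'.1, a * q'.2)) h2 h1
        have : g (p, t) ∈ closure (g '' W) :=
          (hgc.continuousWithinAt).mem_closure_image hqcl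
        have hsubZ : closure (g '' W) ⊆ Z := by
          rw [← hZ.closure_eq]
          exact closure_mono (fun x ⟨q', hq', hx⟩ => hx ▸ hgW q' hq')
        have := hsubZ this
        simpa [hg, hat] using this
    refine ⟨hqU, hq1Z, ?_⟩
    have h0S : (0 : ℝ) ∈ {t : ℝ | ∀ s ∈ Set.uIcc 0 t, (p, s) ∈ U ∧ Ψ (p, s) ∈ Z} := by
      intro s hs
      have : s = 0 := by simpa using hs
      subst this
      exact ⟨h0 p, by rw [hΨ0]; exact hq1Z⟩
    exact (hSord p).isPreconnected.subset_connectedComponentIn h0S subset_rfl hmem
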